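/- Let V be a finite set and let f be a nonnegative submodular function on subsets of V, i.e., f(A) ≥ 0 for all A ⊆ V and f(A∪B) + f(A∩B) ≤ f(A) + f(B) for all A, B ⊆ V. Let S ⊆ V, let p ∈ [0,1], and let R be a random subset of V∖S (with an arbitrary, not necessarily independent, joint distribution) such that P(v ∈ R) ≤ p for every v ∈ V∖S. Then E[f(S ∪ R)] ≥ (1 − p)·f(S). (Lemma B.1, submodular sampling lemma.) -/

import Mathlib

/-!
Put `g R = f (S ∪ R)` and `x v = P(v ∈ R)`. Listing the elements of `Sᶜ` by decreasing `x` and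
telescoping along the prefixes `A₁ ⊆ A₂ ⊆ ⋯`, submodularity gives
`E[g R] ≥ g ∅ + ∑ᵢ xᵢ (g Aᵢ - g Aᵢ₋₁)`, the Lovász extension of `g` at `x`, which is at least
`(1 - max x) g ∅` because `g ≥ 0`. To avoid sorting, the induction removes an element of least
marginal one at a time and carries the stronger bound `E[g (R ∩ T)] ≥ (1 - p) g ∅ + q g T`
whenever all marginals on `T` lie in `[q, p]`.
-/

open Finset

section

variable {V : Type*} [DecidableEq V]

def Submodular (g : Finset V → ℝ) : Prop :=
  ∀ A B : Finset V, g (A ∪ B) + g (A ∩ B) ≤ g A + g B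

namespace Submodular

variable {g : Finset V → ℝ}

theorem comp_union (hg : Submodular g) (S : Finset V) : Submodular fun R => g (S ∪ R) := by
  intro A B
  have := hg (S ∪ A) (S ∪ B)
  rwa [← union_union_distrib_left, ← union_inter_distrib_left] at this

theorem insert_sub_le_insert_sub (hg : Submodular g) {X Y : Finset V} {u : V} (hXY : X ⊆ Y)
    (hu : u ∉ Y) : g (insert u Y) - g Y ≤ g (insert u X) - g X := by
  have := hg (insert u X) Y
  rw [insert_union, union_eq_right.2 hXY, insert_inter_of_notMem hu, inter_eq_left.2 hXY] at this
  linarith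

theorem ite_mem_le_inter_insert_sub (hg : Submodular g) {T : Finset V} {u : V} (hu : u ∉ T)
    (R : Finset V) :
    (if u ∈ R then g (insert u T) - g T else 0) ≤ g (R ∩ insert u T) - g (R ∩ T) := by
  by_cases huR : u ∈ R
  · rw [if_pos huR, inter_insert_of_mem huR]
    exact hg.insert_sub_le_insert_sub inter_subset_right hu
  · rw [if_neg huR, inter_insert_of_notMem huR, sub_self]

end Submodular

variable [Fintype V]

def marginal (μ : Finset V → ℝ) (v : V) : ℝ :=
  ∑ R ∈ univ.filter (fun R : Finset V => v ∈ R), μ R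

theorem marginal_nonneg {μ : Finset V → ℝ} (hμ0 : ∀ R, 0 ≤ μ R) (v : V) : 0 ≤ marginal μ v :=
  sum_nonneg fun R _ => hμ0 R

theorem sum_mul_ite_mem (μ : Finset V → ℝ) (u : V) (c : ℝ) :
    ∑ R, μ R * (if u ∈ R then c else 0) = marginal μ u * c := by
  simp only [mul_ite, mul_zero, marginal, sum_filter, sum_mul, ite_mul, zero_mul]

namespace Submodular

variable {g : Finset V → ℝ} {μ : Finset V → ℝ}

theorem marginal_mul_insert_sub_le (hg : Submodular g) (hμ0 : ∀ R, 0 ≤ μ R) {T : Finset V}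
    {u : V} (hu : u ∉ T) :
    marginal μ u * (g (insert u T) - g T) ≤
      ∑ R, μ R * g (R ∩ insert u T) - ∑ R, μ R * g (R ∩ T) := by
  rw [← sum_mul_ite_mem, ← sum_sub_distrib]
  refine sum_le_sum fun R _ => ?_
  rw [← mul_sub]
  exact mul_le_mul_of_nonneg_left (hg.ite_mem_le_inter_insert_sub hu R) (hμ0 R)

theorem lower_bound_sum_mul_inter (hg : Submodular g) (hg0 : ∀ A, 0 ≤ g A)
    (hμ0 : ∀ R, 0 ≤ μ R) (hμ1 : ∑ R, μ R = 1) {p q : ℝ} (hqp : q ≤ p) (T : Finset V)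
    (hmarg : ∀ v ∈ T, q ≤ marginal μ v ∧ marginal μ v ≤ p) :
    (1 - p) * g ∅ + q * g T ≤ ∑ R, μ R * g (R ∩ T) := by
  induction T using Finset.strongInduction generalizing q with
  | H T ih =>
  rcases T.eq_empty_or_nonempty with rfl | hT
  · simp only [inter_empty, ← sum_mul, hμ1]
    linarith [mul_le_mul_of_nonneg_right hqp (hg0 ∅)]
  obtain ⟨u, hu, hmin⟩ := T.exists_min_image (marginal μ) hT
  have hpeel := hg.marginal_mul_insert_sub_le hμ0 (notMem_erase u T)
  rw [insert_erase hu] at hpeel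
  have hrest := ih (T.erase u) (erase_ssubset hu) (hmarg u hu).2
    fun v hv => ⟨hmin v (mem_of_mem_erase hv), (hmarg v (mem_of_mem_erase hv)).2⟩
  linarith [mul_le_mul_of_nonneg_right (hmarg u hu).1 (hg0 T)]

end Submodular

end

theorem submodular_sampling {V : Type*} [Fintype V] [DecidableEq V]
    (f : Finset V → ℝ)
    (hf0 : ∀ A : Finset V, 0 ≤ f A)
    (hsub : ∀ A B : Finset V, f (A ∪ B) + f (A ∩ B) ≤ f A + f B)
    (S : Finset V) (p : ℝ) (hp0 : 0 ≤ p)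
    (μ : Finset V → ℝ) (hμ0 : ∀ R, 0 ≤ μ R) (hμ1 : ∑ R : Finset V, μ R = 1)
    (hmarg : ∀ v ∉ S, ∑ R ∈ Finset.univ.filter (fun R : Finset V => v ∈ R), μ R ≤ p) :
    (1 - p) * f S ≤ ∑ R : Finset V, μ R * f (S ∪ R) := by
  have key := (Submodular.comp_union hsub S).lower_bound_sum_mul_inter (fun _ => hf0 _) hμ0 hμ1
    hp0 Sᶜ fun v hv => ⟨marginal_nonneg hμ0 v, hmarg v (mem_compl.1 hv)⟩
  simpa only [union_empty, zero_mul, add_zero, ← sdiff_eq_inter_compl, union_sdiff_self_eq_union]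
    using key
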